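/- Let A_i → A be a monotone nondecreasing pointwise-convergent sequence of continuous symmetric-matrix-valued functions on [0,T] (i.e. A(t) − A_i(t) ≥ 0 for all i, t), and let M_i, M solve the corresponding ODEs M_i' = −M_i·A_i, M' = −M·A with M_i(0) = M(0) = I. Then ‖M_i(t) − M(t)‖ → 0 uniformly on [0,T] as i → ∞. -/
import Mathlib


open RealInnerProductSpace

variable {F : Type*} [NormedAddCommGroup F] [InnerProductSpace ℝ F]

lemma cs_aux (B : F →L[ℝ] F) (hsym : ∀ u v : F, ⟪B u, v⟫ = ⟪u, B v⟫)
    (hpos : ∀ v : F, 0 ≤ ⟪B v, v⟫) (u w : F) :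
    ⟪B u, w⟫ ^ 2 ≤ ⟪B u, u⟫ * ⟪B w, w⟫ := by
  have key : ∀ t : ℝ, 0 ≤ ⟪B w, w⟫ * (t * t) + (2 * ⟪B u, w⟫) * t + ⟪B u, u⟫ := by
    intro t
    have h0 := hpos (u + t • w)
    have hsw : ⟪B w, u⟫ = ⟪B u, w⟫ := by rw [hsym w u, real_inner_comm]
    have e1 : ⟪B (u + t • w), u + t • w⟫
        = ⟪B u, u⟫ + t * ⟪B u, w⟫ + t * ⟪B w, u⟫ + t * t * ⟪B w, w⟫ := by
      rw [map_add, map_smul]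
      simp [inner_add_left, inner_add_right, real_inner_smul_left, real_inner_smul_right]
      ring
    rw [e1, hsw] at h0
    nlinarith [h0]
  have hd : discrim (⟪B w, w⟫) (2 * ⟪B u, w⟫) (⟪B u, u⟫) ≤ 0 := discrim_le_zero key
  rw [discrim] at hd
  nlinarith [hd]

lemma norm_le_of_quad (B : F →L[ℝ] F) (hsym : ∀ u v : F, ⟪B u, v⟫ = ⟪u, B v⟫)
    (hpos : ∀ v : F, 0 ≤ ⟪B v, v⟫) {c : ℝ} (hc : 0 ≤ c)
    (hq : ∀ v : F, ⟪B v, v⟫ ≤ c * ‖v‖ ^ 2) : ‖B‖ ≤ c := by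
  refine ContinuousLinearMap.opNorm_le_bound _ hc fun u => ?_
  have h1 := cs_aux B hsym hpos u (B u)
  have h2 : ⟪B u, B u⟫ = ‖B u‖ ^ 2 := real_inner_self_eq_norm_sq _
  rw [h2] at h1
  have h3 : ⟪B u, u⟫ ≤ c * ‖u‖ ^ 2 := hq u
  have h4 : ⟪B (B u), B u⟫ ≤ c * ‖B u‖ ^ 2 := hq (B u)
  have h5 : 0 ≤ ⟪B u, u⟫ := hpos u
  have h6 : 0 ≤ ⟪B (B u), B u⟫ := hpos (B u)
  by_contra h'
  push_neg at h'
  have hBu : 0 < ‖B u‖ := lt_of_le_of_lt (mul_nonneg hc (norm_nonneg _)) h'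
  have ha : c * ‖u‖ * (c * ‖u‖) < ‖B u‖ * ‖B u‖ := by
    nlinarith [mul_nonneg hc (norm_nonneg u)]
  have hb : (‖B u‖ ^ 2) ^ 2 ≤ c * ‖u‖ ^ 2 * (c * ‖B u‖ ^ 2) :=
    h1.trans (mul_le_mul h3 h4 h6 (by positivity))
  nlinarith [mul_pos hBu hBu, ha, hb]

lemma norm_le_norm_of_quad (B C : F →L[ℝ] F) (hsym : ∀ u v : F, ⟪B u, v⟫ = ⟪u, B v⟫)
    (hpos : ∀ v : F, 0 ≤ ⟪B v, v⟫) (hq : ∀ v : F, ⟪B v, v⟫ ≤ ⟪C v, v⟫) : ‖B‖ ≤ ‖C‖ := by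
  refine norm_le_of_quad B hsym hpos (norm_nonneg C) fun v => (hq v).trans ?_
  calc ⟪C v, v⟫ ≤ ‖C v‖ * ‖v‖ := real_inner_le_norm _ _
    _ ≤ ‖C‖ * ‖v‖ * ‖v‖ := by
        have := C.le_opNorm v
        nlinarith [norm_nonneg v]
    _ = ‖C‖ * ‖v‖ ^ 2 := by ring


/-- Let `A_i → A` be a monotone nondecreasing (in the order of symmetric
operators) pointwise-convergent sequence of continuous symmetric-operator-valued functions
on `[0,T]`, and let `M_i`, `M` solve the corresponding linear ODEs `X' = −X·A` with
`X(0) = I`. Then `‖M_i(t) − M(t)‖ → 0` uniformly on `[0,T]` as `i → ∞`. -/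
theorem stmt8 {N : ℕ} {T : ℝ} (hT : 0 ≤ T)
    (A : ℕ → ℝ → EuclideanSpace ℝ (Fin N) →L[ℝ] EuclideanSpace ℝ (Fin N))
    (Alim : ℝ → EuclideanSpace ℝ (Fin N) →L[ℝ] EuclideanSpace ℝ (Fin N))
    (M : ℕ → ℝ → EuclideanSpace ℝ (Fin N) →L[ℝ] EuclideanSpace ℝ (Fin N))
    (Mlim : ℝ → EuclideanSpace ℝ (Fin N) →L[ℝ] EuclideanSpace ℝ (Fin N))
    (hAc : ∀ i, ContinuousOn (A i) (Set.Icc 0 T))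
    (hAlimc : ContinuousOn Alim (Set.Icc 0 T))
    (hsym : ∀ i t (u v : EuclideanSpace ℝ (Fin N)), ⟪A i t u, v⟫ = ⟪u, A i t v⟫)
    (hsyml : ∀ t (u v : EuclideanSpace ℝ (Fin N)), ⟪Alim t u, v⟫ = ⟪u, Alim t v⟫)
    (hmono : ∀ i, ∀ t ∈ Set.Icc (0:ℝ) T, ∀ v : EuclideanSpace ℝ (Fin N),
      ⟪A i t v, v⟫ ≤ ⟪A (i + 1) t v, v⟫)
    (hle : ∀ i, ∀ t ∈ Set.Icc (0:ℝ) T, ∀ v : EuclideanSpace ℝ (Fin N),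
      ⟪A i t v, v⟫ ≤ ⟪Alim t v, v⟫)
    (hptw : ∀ t ∈ Set.Icc (0:ℝ) T,
      Filter.Tendsto (fun i => A i t) Filter.atTop (nhds (Alim t)))
    (hM : ∀ i, ∀ t ∈ Set.Icc (0:ℝ) T, HasDerivAt (M i) (-(M i t).comp (A i t)) t)
    (hMl : ∀ t ∈ Set.Icc (0:ℝ) T, HasDerivAt Mlim (-(Mlim t).comp (Alim t)) t)
    (hM0 : ∀ i, M i 0 = ContinuousLinearMap.id ℝ _)
    (hMl0 : Mlim 0 = ContinuousLinearMap.id ℝ _) :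
    TendstoUniformlyOn M Mlim Filter.atTop (Set.Icc 0 T) := by
  -- monotonicity in i
  have hmono' : ∀ t ∈ Set.Icc (0:ℝ) T, ∀ v : EuclideanSpace ℝ (Fin N), ∀ i j, i ≤ j →
      ⟪A i t v, v⟫ ≤ ⟪A j t v, v⟫ := by
    intro t ht v i j hij
    induction j, hij using Nat.le_induction with
    | base => exact le_rfl
    | succ n hn ih => exact ih.trans (hmono n t ht v)
  -- symmetry of differences
  have hsymd : ∀ i t, ∀ u v : EuclideanSpace ℝ (Fin N),
      ⟪(Alim t - A i t) u, v⟫ = ⟪u, (Alim t - A i t) v⟫ := by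
    intro i t u v
    simp only [ContinuousLinearMap.sub_apply, inner_sub_left, inner_sub_right]
    rw [hsym, hsyml]
  -- norm comparison
  have hcmp : ∀ i j, i ≤ j → ∀ t ∈ Set.Icc (0:ℝ) T,
      ‖Alim t - A j t‖ ≤ ‖Alim t - A i t‖ := by
    intro i j hij t ht
    refine norm_le_norm_of_quad _ _ (hsymd j t) (fun v => ?_) (fun v => ?_)
    · simp only [ContinuousLinearMap.sub_apply, inner_sub_left]
      linarith [hle j t ht v]
    · simp only [ContinuousLinearMap.sub_apply, inner_sub_left]
      linarith [hmono' t ht v i j hij]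
  -- uniform bound K on ‖A i t‖ and ‖Alim t‖
  obtain ⟨t₀, ht₀, hmax'⟩ := isCompact_Icc.exists_isMaxOn (Set.nonempty_Icc.2 hT)
    ((continuousOn_const.mul (hAc 0).norm).add hAlimc.norm :
      ContinuousOn (fun t => (2:ℝ) * ‖A 0 t‖ + ‖Alim t‖) (Set.Icc 0 T))
  have hmax : ∀ s ∈ Set.Icc (0:ℝ) T, (2:ℝ) * ‖A 0 s‖ + ‖Alim s‖ ≤ 2 * ‖A 0 t₀‖ + ‖Alim t₀‖ :=
    fun s hs => hmax' hs
  set K : ℝ := 2 * ‖A 0 t₀‖ + ‖Alim t₀‖ + 1 with hKdef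
  have hK0 : 0 < K := by positivity
  have hKAl : ∀ t ∈ Set.Icc (0:ℝ) T, ‖Alim t‖ ≤ K := by
    intro t ht
    have := hmax t ht
    have h0 : (0:ℝ) ≤ 2 * ‖A 0 t‖ := by positivity
    simp only [hKdef]; linarith
  have hKA : ∀ i, ∀ t ∈ Set.Icc (0:ℝ) T, ‖A i t‖ ≤ K := by
    intro i t ht
    have h1 : ‖A i t - A 0 t‖ ≤ ‖Alim t - A 0 t‖ := by
      refine norm_le_norm_of_quad _ _ (fun u v => ?_) (fun v => ?_) (fun v => ?_)
      · simp only [ContinuousLinearMap.sub_apply, inner_sub_left, inner_sub_right]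
        rw [hsym, hsym]
      · simp only [ContinuousLinearMap.sub_apply, inner_sub_left]
        linarith [hmono' t ht v 0 i (Nat.zero_le i)]
      · simp only [ContinuousLinearMap.sub_apply, inner_sub_left]
        linarith [hle i t ht v]
    have h2 : ‖A i t‖ ≤ ‖A i t - A 0 t‖ + ‖A 0 t‖ := by
      calc ‖A i t‖ = ‖(A i t - A 0 t) + A 0 t‖ := by rw [sub_add_cancel]
        _ ≤ ‖A i t - A 0 t‖ + ‖A 0 t‖ := norm_add_le _ _
    have h3 : ‖Alim t - A 0 t‖ ≤ ‖Alim t‖ + ‖A 0 t‖ := norm_sub_le _ _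
    have h4 := hmax t ht
    simp only [hKdef]; linarith
  -- continuity of solutions
  have hMc : ∀ i, ContinuousOn (M i) (Set.Icc 0 T) :=
    fun i t ht => ((hM i t ht).continuousAt).continuousWithinAt
  have hMlc : ContinuousOn Mlim (Set.Icc 0 T) :=
    fun t ht => ((hMl t ht).continuousAt).continuousWithinAt
  -- bound on ‖Mlim‖
  set C : ℝ := Real.exp (K * T) with hCdef
  have hC : 0 < C := Real.exp_pos _
  have hMlb : ∀ t ∈ Set.Icc (0:ℝ) T, ‖Mlim t‖ ≤ C := by
    intro t ht
    have key := norm_le_gronwallBound_of_norm_deriv_right_le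
      (f := Mlim) (f' := fun s => -(Mlim s).comp (Alim s)) (δ := 1) (K := K) (ε := 0)
      (a := 0) (b := t)
      (hMlc.mono (Set.Icc_subset_Icc le_rfl ht.2))
      (fun s hs => (hMl s ⟨hs.1, hs.2.le.trans ht.2⟩).hasDerivWithinAt)
      (by rw [hMl0]; exact ContinuousLinearMap.norm_id_le)
      (fun s hs => by
        have hsT : s ∈ Set.Icc (0:ℝ) T := ⟨hs.1, hs.2.le.trans ht.2⟩
        rw [norm_neg]
        calc ‖(Mlim s).comp (Alim s)‖ ≤ ‖Mlim s‖ * ‖Alim s‖ :=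
              ContinuousLinearMap.opNorm_comp_le _ _
          _ ≤ ‖Mlim s‖ * K := by
              have := hKAl s hsT
              nlinarith [norm_nonneg (Mlim s)]
          _ ≤ K * ‖Mlim s‖ + 0 := by ring_nf; exact le_rfl)
    have key' := key t ⟨ht.1, le_rfl⟩
    rw [gronwallBound_ε0] at key'
    calc ‖Mlim t‖ ≤ 1 * Real.exp (K * (t - 0)) := key'
      _ ≤ C := by
          rw [one_mul, hCdef, sub_zero]
          exact Real.exp_le_exp.2 (mul_le_mul_of_nonneg_left ht.2 hK0.le)
  -- Dini-type uniform convergence of A i to Alim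
  have dini : ∀ ε : ℝ, 0 < ε → ∃ i₀ : ℕ, ∀ i ≥ i₀, ∀ t ∈ Set.Icc (0:ℝ) T,
      ‖Alim t - A i t‖ < ε := by
    intro ε hε
    have hcov : ∀ t ∈ Set.Icc (0:ℝ) T, ∃ p : ℕ × Set ℝ, IsOpen p.2 ∧ t ∈ p.2 ∧
        ∀ s ∈ p.2 ∩ Set.Icc (0:ℝ) T, ‖Alim s - A p.1 s‖ < ε := by
      intro t ht
      have h1 : Filter.Tendsto (fun i => ‖Alim t - A i t‖) Filter.atTop (nhds 0) := by
        have h2 : Filter.Tendsto (fun i => Alim t - A i t) Filter.atTop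
            (nhds (Alim t - Alim t)) := Filter.Tendsto.sub tendsto_const_nhds (hptw t ht)
        rw [sub_self] at h2
        simpa only [norm_zero] using h2.norm
      obtain ⟨it, hit⟩ := (h1.eventually (gt_mem_nhds hε)).exists
      have hcont : ContinuousWithinAt (fun s => ‖Alim s - A it s‖) (Set.Icc 0 T) t :=
        ((hAlimc.sub (hAc it)).norm) t ht
      have hnb := hcont.eventually (gt_mem_nhds hit)
      rw [Filter.eventually_iff, mem_nhdsWithin] at hnb
      obtain ⟨U, hUo, htU, hU⟩ := hnb
      exact ⟨(it, U), hUo, htU, fun s hs => hU ⟨hs.1, hs.2⟩⟩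
    choose p hpo hpt hp using hcov
    obtain ⟨Fs, hFs⟩ := isCompact_Icc.elim_nhds_subcover'
      (fun t ht => (p t ht).2) (fun t ht => (hpo t ht).mem_nhds (hpt t ht))
    refine ⟨Fs.sup (fun x => (p x x.2).1), fun i hi t ht => ?_⟩
    obtain ⟨x, hxF, hxU⟩ := Set.mem_iUnion₂.mp (hFs ht)
    have h1 : ‖Alim t - A (p x x.2).1 t‖ < ε := hp x x.2 t ⟨hxU, ht⟩
    have h2 : ‖Alim t - A i t‖ ≤ ‖Alim t - A (p x x.2).1 t‖ :=
      hcmp _ i (le_trans (Finset.le_sup hxF) hi) t ht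
    exact lt_of_le_of_lt h2 h1
  -- conclusion via Gronwall
  rw [Metric.tendstoUniformlyOn_iff]
  intro ε hε
  set ε' : ℝ := ε * K / (2 * C * C) with hε'def
  have hε' : 0 < ε' := by positivity
  obtain ⟨i₀, hi₀⟩ := dini ε' hε'
  filter_upwards [Filter.eventually_ge_atTop i₀] with i hi
  intro t ht
  have key := norm_le_gronwallBound_of_norm_deriv_right_le
    (f := fun s => M i s - Mlim s)
    (f' := fun s => -(M i s).comp (A i s) - -(Mlim s).comp (Alim s))
    (δ := 0) (K := K) (ε := C * ε') (a := 0) (b := t)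
    (((hMc i).sub hMlc).mono (Set.Icc_subset_Icc le_rfl ht.2))
    (fun s hs => ((hM i s ⟨hs.1, hs.2.le.trans ht.2⟩).sub
      (hMl s ⟨hs.1, hs.2.le.trans ht.2⟩)).hasDerivWithinAt)
    (by show ‖M i 0 - Mlim 0‖ ≤ 0; rw [hM0 i, hMl0, sub_self, norm_zero])
    (fun s hs => by
      have hsT : s ∈ Set.Icc (0:ℝ) T := ⟨hs.1, hs.2.le.trans ht.2⟩
      show ‖-(M i s).comp (A i s) - -(Mlim s).comp (Alim s)‖
          ≤ K * ‖M i s - Mlim s‖ + C * ε'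
      have hrw : -(M i s).comp (A i s) - -(Mlim s).comp (Alim s)
          = -((M i s - Mlim s).comp (A i s)) + (Mlim s).comp (Alim s - A i s) := by
        simp only [ContinuousLinearMap.sub_comp, ContinuousLinearMap.comp_sub,
          ContinuousLinearMap.neg_comp]
        abel
      rw [hrw]
      calc ‖-((M i s - Mlim s).comp (A i s)) + (Mlim s).comp (Alim s - A i s)‖
          ≤ ‖-((M i s - Mlim s).comp (A i s))‖ + ‖(Mlim s).comp (Alim s - A i s)‖ :=
            norm_add_le _ _
        _ ≤ ‖M i s - Mlim s‖ * ‖A i s‖ + ‖Mlim s‖ * ‖Alim s - A i s‖ := by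
            rw [norm_neg]
            exact add_le_add (ContinuousLinearMap.opNorm_comp_le _ _)
              (ContinuousLinearMap.opNorm_comp_le _ _)
        _ ≤ K * ‖M i s - Mlim s‖ + C * ε' := by
            have b1 := hKA i s hsT
            have b2 := hMlb s hsT
            have b3 := (hi₀ i hi s hsT).le
            have n1 := norm_nonneg (M i s - Mlim s)
            have n2 := norm_nonneg (Mlim s)
            have n3 := norm_nonneg (Alim s - A i s)
            nlinarith)
  -- bound the gronwall bound
  have hgb : gronwallBound 0 K (C * ε') (t - 0) < ε := by
    simp only [gronwallBound_of_K_ne_0 hK0.ne']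
    have he : Real.exp (K * (t - 0)) - 1 ≤ C := by
      rw [sub_zero, hCdef]
      have := Real.exp_le_exp.2 (mul_le_mul_of_nonneg_left ht.2 hK0.le)
      linarith
    have h1 : C * ε' / K * (Real.exp (K * (t - 0)) - 1) ≤ C * ε' / K * C :=
      mul_le_mul_of_nonneg_left he (by positivity)
    have h2 : C * ε' / K * C = ε / 2 := by
      rw [hε'def]; field_simp
    rw [zero_mul, zero_add]
    linarith
  have hfin : ‖M i t - Mlim t‖ < ε := lt_of_le_of_lt (key t ⟨ht.1, le_rfl⟩) hgb
  rw [dist_eq_norm, norm_sub_rev]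
  exact hfin
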